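/- arXiv:2112.15148 — 3 statements merged into one kernel-verified Lean document; each statement's English description precedes it below -/
import Mathlib

section
/- Let P_n(t) be the polynomials defined recursively by P_{-1}(t) = 1, P_0(t) = 1, and P_{n+1}(t) = P_n(t) - t·P_{n-1}(t) for n ≥ 0. Then for λ = 1/(4cos²(π/m)) with m ≥ 3, one has P_{m-2}(λ) = 0, while P_n(λ) > 0 for all -1 ≤ n < m-2. -/
/-! With `c = 2 cos θ` and `λ = 1/c²`, the rescaled values `Pₙ(λ) · cⁿ⁺¹ · sin θ` satisfy the
Chebyshev recursion `u_{n+1} = c uₙ - u_{n-1}` of `sin ((n + 2) θ)`, so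
`P_{k-1}(λ) = sin ((k + 1) θ) / (sin θ · cᵏ)`. For `θ = π/m` the numerator `sin ((k + 1) π / m)`
vanishes at `k = m - 1` and is positive for `k < m - 1`. -/

open Real

theorem jones_eq_sin_div (P : ℤ → ℝ) (θ : ℝ) (hs : sin θ ≠ 0) (hc : cos θ ≠ 0)
    (hP1 : P (-1) = 1) (hP0 : P 0 = 1)
    (hrec : ∀ n : ℤ, 0 ≤ n → P (n + 1) = P n - 1 / (4 * cos θ ^ 2) * P (n - 1)) (k : ℕ) :
    P (k - 1) = sin ((k + 1) * θ) / (sin θ * (2 * cos θ) ^ k) := by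
  induction k using Nat.twoStepInduction with
  | zero => simpa [hs] using hP1
  | one =>
    rw [Nat.cast_one, Nat.cast_one, one_add_one_eq_two, sin_two_mul, sub_self, hP0]
    field_simp
  | more k ih₀ ih₁ =>
    have hchebyshev :
        sin ((k + 2 + 1) * θ) = 2 * sin ((k + 1 + 1) * θ) * cos θ - sin ((k + 1) * θ) := by
      rw [two_mul_sin_mul_cos]; ring_nf
    have hstep := hrec k (Int.natCast_nonneg k)
    push_cast at ih₁ ⊢
    rw [add_sub_cancel_right] at ih₁
    rw [show (k : ℤ) + 2 - 1 = k + 1 by ring, hstep, ih₀, ih₁, hchebyshev]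
    field_simp
    ring

/-- With the Jones polynomials `P₋₁ = 1`, `P₀ = 1`,
`P_{n+1} = P_n - t·P_{n-1}`, evaluated at `λ = 1/(4cos²(π/m))` for `m ≥ 3`,
one has `P_{m-2}(λ) = 0` and `P_n(λ) > 0` for `-1 ≤ n < m-2`. -/
theorem stmt0 (P : ℤ → ℝ) (lam : ℝ) (m : ℕ) (hm : 3 ≤ m)
    (hlam : lam = 1 / (4 * Real.cos (Real.pi / m) ^ 2))
    (hP1 : P (-1) = 1) (hP0 : P 0 = 1)
    (hrec : ∀ n : ℤ, 0 ≤ n → P (n + 1) = P n - lam * P (n - 1)) :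
    P ((m : ℤ) - 2) = 0 ∧ ∀ n : ℤ, -1 ≤ n → n < (m : ℤ) - 2 → 0 < P n := by
  subst hlam
  have hm' : (2 : ℝ) < m := by exact_mod_cast hm
  have hθ : 0 < π / m := by positivity
  have hθ' : π / m < π / 2 := div_lt_div_of_pos_left pi_pos two_pos hm'
  have hc : 0 < cos (π / m) := cos_pos_of_mem_Ioo ⟨by linarith, hθ'⟩
  have hs : 0 < sin (π / m) := sin_pos_of_pos_of_lt_pi hθ (by linarith)
  have hclosed := jones_eq_sin_div P _ hs.ne' hc.ne' hP1 hP0 hrec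
  constructor
  · obtain ⟨k, rfl⟩ : ∃ k, m = k + 1 := ⟨m - 1, by omega⟩
    have hπ : ((k : ℝ) + 1) * (π / (k + 1 : ℕ)) = π := by push_cast; field_simp
    rw [show ((k + 1 : ℕ) : ℤ) - 2 = k - 1 by push_cast; ring, hclosed, hπ, sin_pi, zero_div]
  · intro n hn₁ hn₂
    obtain ⟨k, rfl⟩ : ∃ k : ℕ, n = k - 1 := ⟨(n + 1).toNat, by omega⟩
    have hkm : (k : ℝ) + 1 < m := by exact_mod_cast (by omega : (k : ℤ) + 1 < m)
    have hangle : ((k : ℝ) + 1) * (π / m) < π := by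
      rw [← mul_div_assoc, div_lt_iff₀ (by linarith)]
      nlinarith [pi_pos]
    rw [hclosed]
    have hsin := sin_pos_of_pos_of_lt_pi (by positivity) hangle
    positivity
end

section
/- Let P_n(t) be defined by P_{-1}(t) = 1, P_0(t) = 1, P_{n+1}(t) = P_n(t) - t·P_{n-1}(t). If 0 < λ ≤ 1/4, then P_n(λ) > 0 for all n ≥ -1. -/
/-- With `P₋₁ = 1`, `P₀ = 1`, `P_{n+1} = P_n - t·P_{n-1}`,
if `0 < λ ≤ 1/4` then `P_n(λ) > 0` for all `n ≥ -1`. -/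
theorem stmt1 (P : ℤ → ℝ) (lam : ℝ) (h1 : 0 < lam) (h2 : lam ≤ 1 / 4)
    (hP1 : P (-1) = 1) (hP0 : P 0 = 1)
    (hrec : ∀ n : ℤ, 0 ≤ n → P (n + 1) = P n - lam * P (n - 1)) :
    ∀ n : ℤ, -1 ≤ n → 0 < P n := by
  have key : ∀ n : ℤ, 0 ≤ n → 0 < P (n - 1) ∧ 0 < P n ∧ P (n - 1) ≤ 2 * P n := by
    refine Int.le_induction ?_ ?_
    · simp only [zero_sub, hP0, hP1]; norm_num
    · intro n hn ih
      obtain ⟨h₁, h₂, h₃⟩ := ih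
      have hr := hrec n hn
      have hhalf : P n / 2 ≤ P (n + 1) := by
        rw [hr]
        have : lam * P (n - 1) ≤ (1 / 4) * (2 * P n) :=
          mul_le_mul h2 h₃ (le_of_lt h₁) (by norm_num)
        linarith
      have hpos : 0 < P (n + 1) := lt_of_lt_of_le (by linarith) hhalf
      refine ⟨by simpa using h₂, hpos, ?_⟩
      simp only [add_sub_cancel_right]
      linarith
  intro n hn
  rcases eq_or_lt_of_le hn with h | h
  · rw [← h]; rw [hP1]; norm_num
  · have : 0 ≤ n := by omega
    exact (key n this).2.1
end

section
/- Let Λ = (b_{ij})_{i∈I, j∈J} be a (possibly infinite) matrix with nonnegative real entries defining a bounded operator ℓ²(J) → ℓ²(I), and suppose there is a vector t = (t_j)_{j∈J} with strictly positive entries (not necessarily ℓ²) satisfying ΛᵀΛ t = λ^{-1} t entrywise, where 0 < λ. Then ‖Λ‖² ≤ λ^{-1}. -/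
/-!
Schur test. For each row, Cauchy–Schwarz weighted by `t` gives
`(∑ⱼ bᵢⱼ |fⱼ|)² ≤ (∑ⱼ bᵢⱼ tⱼ) (∑ⱼ bᵢⱼ fⱼ² / tⱼ)`; summing over `i` and exchanging the order of
summation, the hypothesis `∑ᵢ bᵢⱼ ∑ⱼ' bᵢⱼ' tⱼ' ≤ c tⱼ` bounds the total by `c ∑ⱼ fⱼ²`.
In `ℝ≥0∞` these exchanges need no summability bookkeeping.
-/

open scoped ENNReal
open MeasureTheory

namespace ENNReal

variable {ι : Type*}

theorem sq_tsum_le_tsum_mul_tsum_of_sq_le_mul {r f g : ι → ℝ≥0∞} (h : ∀ i, r i ^ 2 ≤ f i * g i) :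
    (∑' i, r i) ^ 2 ≤ (∑' i, f i) * ∑' i, g i := by
  let _ : MeasurableSpace ι := ⊤
  have rpow_half_sq (x : ℝ≥0∞) : (x ^ (2⁻¹ : ℝ)) ^ 2 = x := by
    rw [← ENNReal.rpow_natCast, ← ENNReal.rpow_mul]; norm_num
  have holder := ENNReal.lintegral_mul_le_Lp_mul_Lq Measure.count Real.HolderConjugate.two_two
    (f := fun i => f i ^ (2⁻¹ : ℝ)) (g := fun i => g i ^ (2⁻¹ : ℝ))
    measurable_from_top.aemeasurable measurable_from_top.aemeasurable
  simp only [Pi.mul_apply, lintegral_count' measurable_from_top, ENNReal.rpow_two,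
    rpow_half_sq] at holder
  have hr : ∀ i, r i ≤ f i ^ (2⁻¹ : ℝ) * g i ^ (2⁻¹ : ℝ) := fun i => by
    rw [← ENNReal.pow_le_pow_left_iff two_ne_zero, mul_pow, rpow_half_sq, rpow_half_sq]
    exact h i
  calc (∑' i, r i) ^ 2 ≤ (∑' i, f i ^ (2⁻¹ : ℝ) * g i ^ (2⁻¹ : ℝ)) ^ 2 := by
        gcongr with i; exact hr i
    _ ≤ ((∑' i, f i) ^ (1 / 2 : ℝ) * (∑' i, g i) ^ (1 / 2 : ℝ)) ^ 2 := by gcongr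
    _ = (∑' i, f i) * ∑' i, g i := by
        rw [mul_pow, ← ENNReal.rpow_two, ← ENNReal.rpow_two, ← ENNReal.rpow_mul,
          ← ENNReal.rpow_mul]; norm_num

theorem schur_test {I J : Type*} (a : I → J → ℝ≥0∞) {t : J → ℝ≥0∞} (ht₀ : ∀ j, t j ≠ 0)
    (ht : ∀ j, t j ≠ ∞) {c : ℝ≥0∞} (hc : ∀ j, ∑' i, a i j * ∑' j', a i j' * t j' ≤ c * t j)
    (f : J → ℝ≥0∞) :
    ∑' i, (∑' j, a i j * f j) ^ 2 ≤ c * ∑' j, f j ^ 2 := by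
  have weighted_cs (i : I) :
      (∑' j, a i j * f j) ^ 2 ≤ (∑' j, a i j * t j) * ∑' j, a i j * (f j ^ 2 / t j) :=
    sq_tsum_le_tsum_mul_tsum_of_sq_le_mul fun j => le_of_eq <| by
      rw [mul_mul_mul_comm, ← sq, ENNReal.mul_div_cancel (ht₀ j) (ht j), mul_pow]
  calc ∑' i, (∑' j, a i j * f j) ^ 2
      ≤ ∑' i, (∑' j', a i j' * t j') * ∑' j, a i j * (f j ^ 2 / t j) :=
        ENNReal.tsum_le_tsum weighted_cs
    _ = ∑' i, ∑' j, f j ^ 2 / t j * (a i j * ∑' j', a i j' * t j') := by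
        refine tsum_congr fun i => ?_
        rw [← ENNReal.tsum_mul_left]
        exact tsum_congr fun j => by ring
    _ = ∑' j, f j ^ 2 / t j * ∑' i, a i j * ∑' j', a i j' * t j' := by
        rw [ENNReal.tsum_comm]; simp only [ENNReal.tsum_mul_left]
    _ ≤ ∑' j, f j ^ 2 / t j * (c * t j) := by gcongr with j; exact hc j
    _ = c * ∑' j, f j ^ 2 := by
        rw [← ENNReal.tsum_mul_left]
        refine tsum_congr fun j => ?_
        rw [mul_comm c, ← mul_assoc, ENNReal.div_mul_cancel (ht₀ j) (ht j), mul_comm]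

end ENNReal

theorem lp.ofReal_norm_sq_eq_tsum {α : Type*} {E : α → Type*} [∀ i, NormedAddCommGroup (E i)]
    (f : lp E 2) : ENNReal.ofReal (‖f‖ ^ 2) = ∑' i, ‖f i‖ₑ ^ 2 := by
  have hsum := lp.hasSum_norm (p := 2) (by norm_num) f
  simp only [ENNReal.toReal_ofNat, Real.rpow_two] at hsum
  rw [← hsum.tsum_eq, ENNReal.ofReal_tsum_of_nonneg (fun i => by positivity) hsum.summable]
  simp only [ENNReal.ofReal_pow (norm_nonneg _), ofReal_norm]

theorem ContinuousLinearMap.opNorm_sq_le_of_norm_sq_le {𝕜 E F : Type*} [NontriviallyNormedField 𝕜]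
    [SeminormedAddCommGroup E] [SeminormedAddCommGroup F] [NormedSpace 𝕜 E] [NormedSpace 𝕜 F]
    (T : E →L[𝕜] F) {c : ℝ} (hc : 0 ≤ c) (h : ∀ x, ‖T x‖ ^ 2 ≤ c * ‖x‖ ^ 2) : ‖T‖ ^ 2 ≤ c := by
  have hT : ‖T‖ ≤ √c := T.opNorm_le_bound (Real.sqrt_nonneg c) fun x => by
    rw [← pow_le_pow_iff_left₀ (norm_nonneg _) (by positivity) two_ne_zero, mul_pow,
      Real.sq_sqrt hc]
    exact h x
  calc ‖T‖ ^ 2 ≤ √c ^ 2 := by gcongr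
    _ = c := Real.sq_sqrt hc

theorem lp.opNorm_sq_le_of_schur {I J : Type*} (b : I → J → ℝ) (hb : ∀ i j, 0 ≤ b i j)
    (T : lp (fun _ : J => ℝ) 2 →L[ℝ] lp (fun _ : I => ℝ) 2)
    (hT : ∀ f : lp (fun _ : J => ℝ) 2, ∀ i, T f i = ∑' j, b i j * f j)
    {t : J → ℝ} (ht : ∀ j, 0 < t j) {c : ℝ} (hc₀ : 0 ≤ c)
    (hsum₁ : ∀ i, Summable fun j => b i j * t j)
    (hsum₂ : ∀ j, Summable fun i => b i j * ∑' j', b i j' * t j')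
    (hc : ∀ j, ∑' i, b i j * ∑' j', b i j' * t j' ≤ c * t j) :
    ‖T‖ ^ 2 ≤ c := by
  have schur_hyp (j : J) : ∑' i, ENNReal.ofReal (b i j) *
      ∑' j', ENNReal.ofReal (b i j') * ENNReal.ofReal (t j') ≤
      ENNReal.ofReal c * ENNReal.ofReal (t j) := by
    have hS (i : I) : 0 ≤ ∑' j', b i j' * t j' :=
      tsum_nonneg fun j' => mul_nonneg (hb i j') (ht j').le
    simp_rw [← ENNReal.ofReal_mul (hb _ _), ← ENNReal.ofReal_mul hc₀,
      ← ENNReal.ofReal_tsum_of_nonneg (fun j' => mul_nonneg (hb _ j') (ht j').le) (hsum₁ _),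
      ← ENNReal.ofReal_mul (hb _ _),
      ← ENNReal.ofReal_tsum_of_nonneg (fun i => mul_nonneg (hb i j) (hS i)) (hsum₂ j)]
    exact ENNReal.ofReal_le_ofReal (hc j)
  refine T.opNorm_sq_le_of_norm_sq_le hc₀ fun f => ?_
  have entry_le (i : I) : ‖T f i‖ₑ ≤ ∑' j, ENNReal.ofReal (b i j) * ‖f j‖ₑ := by
    rw [hT]
    refine enorm_tsum_le_tsum_enorm.trans_eq (tsum_congr fun j => ?_)
    rw [enorm_mul, Real.enorm_of_nonneg (hb i j)]
  rw [← ENNReal.ofReal_le_ofReal_iff (by positivity), ENNReal.ofReal_mul hc₀,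
    lp.ofReal_norm_sq_eq_tsum, lp.ofReal_norm_sq_eq_tsum]
  calc ∑' i, ‖T f i‖ₑ ^ 2 ≤ ∑' i, (∑' j, ENNReal.ofReal (b i j) * ‖f j‖ₑ) ^ 2 := by
        gcongr with i; exact entry_le i
    _ ≤ ENNReal.ofReal c * ∑' j, ‖f j‖ₑ ^ 2 :=
        ENNReal.schur_test _ (fun j => by simpa using ht j) (fun j => ENNReal.ofReal_ne_top)
          schur_hyp _

/-- If a (possibly infinite) nonnegative matrix `b` defines a bounded
operator `T : ℓ²(J) → ℓ²(I)`, and there is an entrywise strictly positive vector `t`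
with `ΛᵀΛ t = λ⁻¹ t` entrywise (all sums convergent), then `‖Λ‖² ≤ λ⁻¹`. -/
theorem stmt3 {I J : Type*} (b : I → J → ℝ) (hb : ∀ i j, 0 ≤ b i j)
    (T : lp (fun _ : J => ℝ) 2 →L[ℝ] lp (fun _ : I => ℝ) 2)
    (hT : ∀ f : lp (fun _ : J => ℝ) 2, ∀ i : I, (T f : ∀ _ : I, ℝ) i = ∑' j, b i j * (f : ∀ _ : J, ℝ) j)
    (t : J → ℝ) (ht : ∀ j, 0 < t j) (lam : ℝ) (hlam : 0 < lam)
    (hsum1 : ∀ i, Summable (fun j => b i j * t j))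
    (hsum2 : ∀ j, Summable (fun i => b i j * ∑' j', b i j' * t j'))
    (heig : ∀ j, ∑' i, b i j * ∑' j', b i j' * t j' = lam⁻¹ * t j) :
    ‖T‖ ^ 2 ≤ lam⁻¹ :=
  lp.opNorm_sq_le_of_schur b hb T hT ht (inv_nonneg.2 hlam.le) hsum1 hsum2 fun j => (heig j).le
end
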